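/- arXiv:2404.05214 — 2 statements merged into one kernel-verified Lean document; each statement's English description precedes it below -/
import Mathlib

section
/- For any smooth function v with compact support in the open interval (0, ∞), the L² norm of v is bounded by twice the L² norm of x·v'(x), i.e., ‖v‖_{L²((0,∞))} ≤ 2‖x v'‖_{L²((0,∞))}. -/
open MeasureTheory Set

lemma cs_integral {μ : MeasureTheory.Measure ℝ} {f g : ℝ → ℝ}
    (hf : Integrable (fun x => f x ^ 2) μ) (hg : Integrable (fun x => g x ^ 2) μ)
    (hfg : Integrable (fun x => f x * g x) μ) :
    ∫ x, f x * g x ∂μ ≤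
      Real.sqrt (∫ x, f x ^ 2 ∂μ) * Real.sqrt (∫ x, g x ^ 2 ∂μ) := by
  set A := ∫ x, f x ^ 2 ∂μ with hA
  set B := ∫ x, g x ^ 2 ∂μ with hB
  set C := ∫ x, f x * g x ∂μ with hC
  have hA0 : 0 ≤ A := integral_nonneg fun x => sq_nonneg _
  have hB0 : 0 ≤ B := integral_nonneg fun x => sq_nonneg _
  have key : ∀ t : ℝ, 0 ≤ B * (t * t) + (2 * C) * t + A := by
    intro t
    have h0 : 0 ≤ ∫ x, (f x + t * g x) ^ 2 ∂μ :=
      integral_nonneg fun x => sq_nonneg _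
    have heq : (fun x => (f x + t * g x) ^ 2) =
        fun x => f x ^ 2 + ((2 * t) * (f x * g x) + (t * t) * g x ^ 2) := by
      funext x; ring
    have hi1 : Integrable (fun x => (2 * t) * (f x * g x)) μ := hfg.const_mul _
    have hi2 : Integrable (fun x => (t * t) * (g x ^ 2)) μ := hg.const_mul _
    have hi12 : Integrable (fun x => (2 * t) * (f x * g x) + (t * t) * (g x ^ 2)) μ :=
      hi1.add hi2
    rw [heq, integral_add hf hi12, integral_add hi1 hi2,
      integral_const_mul, integral_const_mul] at h0
    linarith
  have hd := discrim_le_zero key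
  rw [discrim] at hd
  have hCsq : C ^ 2 ≤ A * B := by nlinarith
  calc C ≤ |C| := le_abs_self C
    _ = Real.sqrt (C ^ 2) := (Real.sqrt_sq_eq_abs C).symm
    _ ≤ Real.sqrt (A * B) := Real.sqrt_le_sqrt hCsq
    _ = Real.sqrt A * Real.sqrt B := Real.sqrt_mul hA0 B

theorem stmt_0 (v : ℝ → ℝ) (hv : ContDiff ℝ (⊤ : ℕ∞) v) (hcs : HasCompactSupport v)
    (hsupp : tsupport v ⊆ Set.Ioi (0:ℝ)) :
    Real.sqrt (∫ x in Set.Ioi (0:ℝ), (v x)^2) ≤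
      2 * Real.sqrt (∫ x in Set.Ioi (0:ℝ), (x * deriv v x)^2) := by
  have hvc : Continuous v := hv.continuous
  have hvd : Differentiable ℝ v := hv.differentiable (by simp)
  have hdc : Continuous (deriv v) := hv.continuous_deriv (by simp)
  -- integrability
  have hint1 : Integrable (fun x => v x ^ 2) (volume.restrict (Ioi (0:ℝ))) := by
    have : HasCompactSupport (fun x => v x ^ 2) := by
      have := hcs.mul_left (f := v)
      simpa [sq, Pi.mul_def] using this
    exact (((hvc.pow 2).integrable_of_hasCompactSupport this).restrict)
  have hcsg : HasCompactSupport (fun x => x * deriv v x) :=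
    HasCompactSupport.mul_left hcs.deriv
  have hgc : Continuous (fun x => x * deriv v x) := continuous_id.mul hdc
  have hint2 : Integrable (fun x => (x * deriv v x) ^ 2) (volume.restrict (Ioi (0:ℝ))) := by
    have : HasCompactSupport (fun x => (x * deriv v x) ^ 2) := by
      have := hcsg.mul_left (f := fun x => x * deriv v x)
      simpa [sq, Pi.mul_def] using this
    exact (((hgc.pow 2).integrable_of_hasCompactSupport this).restrict)
  have hint3 : Integrable (fun x => v x * (x * deriv v x)) (volume.restrict (Ioi (0:ℝ))) := by
    have : HasCompactSupport (fun x => v x * (x * deriv v x)) :=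
      HasCompactSupport.mul_left hcsg
    exact (((hvc.mul hgc).integrable_of_hasCompactSupport this).restrict)
  set A := ∫ x in Ioi (0:ℝ), v x ^ 2 with hA
  set B := ∫ x in Ioi (0:ℝ), (x * deriv v x) ^ 2 with hB
  set C := ∫ x in Ioi (0:ℝ), v x * (x * deriv v x) with hC
  have hA0 : 0 ≤ A := integral_nonneg fun x => sq_nonneg _
  have hB0 : 0 ≤ B := integral_nonneg fun x => sq_nonneg _
  -- integration by parts: ∫ deriv (x * v²) over Ioi 0 = 0
  have hF : ContDiff ℝ 1 (fun x => x * v x ^ 2) :=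
    (contDiff_id.mul (hv.pow 2)).of_le (by simp)
  have hFcs : HasCompactSupport (fun x => x * v x ^ 2) := by
    have h2 : HasCompactSupport (fun x => v x ^ 2) := by
      have := hcs.mul_left (f := v)
      simpa [sq, Pi.mul_def] using this
    exact HasCompactSupport.mul_left h2
  have hderiv : ∀ x : ℝ, deriv (fun y => y * v y ^ 2) x
      = v x ^ 2 + 2 * (v x * (x * deriv v x)) := by
    intro x
    have h1 : HasDerivAt v (deriv v x) x := (hvd x).hasDerivAt
    have h2 : HasDerivAt (fun y => v y ^ 2) (2 * v x * deriv v x) x := by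
      simpa [Pi.pow_def] using h1.pow 2
    have h3 : HasDerivAt (fun y => y * v y ^ 2)
        (1 * v x ^ 2 + x * (2 * v x * deriv v x)) x := (hasDerivAt_id x).mul h2
    rw [h3.deriv]; ring
  have hibp : ∫ x in Ioi (0:ℝ), deriv (fun y => y * v y ^ 2) x = 0 := by
    rw [HasCompactSupport.integral_Ioi_deriv_eq hF hFcs 0]
    simp
  have hzero : A + 2 * C = 0 := by
    have heq2 : ∫ x in Ioi (0:ℝ), (v x ^ 2 + 2 * (v x * (x * deriv v x))) = 0 :=
      (integral_congr_ae (μ := volume.restrict (Ioi 0))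
        (Filter.Eventually.of_forall fun x => (hderiv x).symm)).trans hibp
    have hi2 : Integrable (fun x => 2 * (v x * (x * deriv v x)))
        (volume.restrict (Ioi (0:ℝ))) := hint3.const_mul 2
    rw [integral_add hint1 hi2, integral_const_mul] at heq2
    linarith
  -- Cauchy–Schwarz
  have hcs2 : -C ≤ Real.sqrt A * Real.sqrt B := by
    have := cs_integral (f := fun x => -v x) (g := fun x => x * deriv v x)
      (μ := volume.restrict (Ioi (0:ℝ))) (by simpa using hint1) hint2
      (by simp only [neg_mul]; exact hint3.neg)
    simpa [integral_neg, neg_mul, neg_sq, hA, hB, hC] using this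
  have hAle : A ≤ 2 * (Real.sqrt A * Real.sqrt B) := by linarith
  -- conclude
  rcases eq_or_lt_of_le (Real.sqrt_nonneg A) with h | h
  · rw [← h]; positivity
  · have hsq : Real.sqrt A * Real.sqrt A = A := Real.mul_self_sqrt hA0
    nlinarith [Real.sqrt_nonneg B, hAle, hsq, h]
end

section
/- Let μ be the self-similar measure on [L,M] with weights μ₁, μ₂ (μ₁+μ₂=1, μᵢ>0) for the contractions f₁(x)=(x+L)/2, f₂(x)=(x+M)/2. Let ψ^m_L be the piecewise linear hat function on [L,M] with ψ^m_L(L)=1, ψ^m_L(L + (M−L)/2^m)=0, supported on [L, L+(M−L)/2^m] and affine there. Then ∫_L^M ψ^m_L dμ = μ₁^{m+1}. Similarly ∫_L^M ψ^m_M dμ = μ₂^{m+1} for the analogous hat at M. -/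
/-!
Self-similarity turns `∫ h dμ` into `μ₁ ∫ h ∘ f₁ dμ + μ₂ ∫ h ∘ f₂ dμ`. Since `ψ^{m+1}_L ∘ f₁ = ψ^m_L`
and `ψ^{m+1}_L ∘ f₂` vanishes on `[L, M]`, the integrals satisfy `I_{m+1} = μ₁ I_m`. On `[L, M]` the
hat `ψ^0_L` is the affine function `(M - x)/(M - L)`, so `I_0 = μ₁` follows from the barycentre
`∫ x dμ = μ₁ L + μ₂ M`, itself a fixed point of the self-similarity relation. The reflection
`x ↦ L + M - x` exchanges the two hats and the two weights.
-/

open MeasureTheory Set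

/-- The boundary hat function `ψ^m_L` at the left endpoint `L`. -/
noncomputable def hatL (L M : ℝ) (m : ℕ) (Y : ℝ) : ℝ :=
  if Y ∈ Set.Icc L (L + (M - L) / 2^m) then 1 - 2^m / (M - L) * (Y - L) else 0

/-- The boundary hat function `ψ^m_M` at the right endpoint `M`. -/
noncomputable def hatM (L M : ℝ) (m : ℕ) (Y : ℝ) : ℝ :=
  if Y ∈ Set.Icc (M - (M - L) / 2^m) M then 2^m / (M - L) * (Y - M) + 1 else 0

def IsSelfSimilar (μ : Measure ℝ) (L M μ₁ μ₂ : ℝ) : Prop :=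
  μ = ENNReal.ofReal μ₁ • μ.map (fun x => (x + L) / 2) +
    ENNReal.ofReal μ₂ • μ.map (fun x => (x + M) / 2)

lemma measurableEmbedding_add_div_two (a : ℝ) :
    MeasurableEmbedding (fun x : ℝ => (x + a) / 2) := by
  simpa only [div_eq_mul_inv, Function.comp_def] using
    (measurableEmbedding_mulRight₀ (inv_ne_zero (two_ne_zero' ℝ))).comp
      (measurableEmbedding_addRight a)

lemma integrable_id_of_ae_mem_Icc {μ : Measure ℝ} [IsFiniteMeasure μ] {L M : ℝ}
    (hsupp : ∀ᵐ x ∂μ, x ∈ Icc L M) : Integrable (fun x : ℝ => x) μ := by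
  rw [← Measure.restrict_eq_self_of_ae_mem hsupp]
  exact continuous_id.integrableOn_Icc

namespace IsSelfSimilar

variable {μ : Measure ℝ} {L M μ₁ μ₂ : ℝ}

lemma integral_eq (hμ : IsSelfSimilar μ L M μ₁ μ₂) (h1 : 0 ≤ μ₁) (h2 : 0 ≤ μ₂) {h : ℝ → ℝ}
    (hint : Integrable h μ) :
    ∫ x, h x ∂μ = μ₁ * ∫ x, h ((x + L) / 2) ∂μ + μ₂ * ∫ x, h ((x + M) / 2) ∂μ := by
  have hint₁ := hint.mono_measure (hμ ▸ Measure.le_add_right le_rfl)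
  have hint₂ := hint.mono_measure (hμ ▸ Measure.le_add_left le_rfl)
  conv_lhs => rw [hμ]
  rw [integral_add_measure hint₁ hint₂, integral_smul_measure, integral_smul_measure,
    (measurableEmbedding_add_div_two L).integral_map,
    (measurableEmbedding_add_div_two M).integral_map,
    ENNReal.toReal_ofReal h1, ENNReal.toReal_ofReal h2, smul_eq_mul, smul_eq_mul]

lemma map_reflect (hμ : IsSelfSimilar μ L M μ₁ μ₂) :
    IsSelfSimilar (μ.map (fun x => L + M - x)) L M μ₂ μ₁ := by
  have hr : Measurable (fun x : ℝ => L + M - x) := by fun_prop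
  have hf₁ : Measurable (fun x : ℝ => (x + L) / 2) := by fun_prop
  have hf₂ : Measurable (fun x : ℝ => (x + M) / 2) := by fun_prop
  have e₁ : (fun x : ℝ => L + M - x) ∘ (fun x => (x + L) / 2)
      = (fun x => (x + M) / 2) ∘ (fun x => L + M - x) := by
    funext x; simp only [Function.comp_apply]; ring
  have e₂ : (fun x : ℝ => L + M - x) ∘ (fun x => (x + M) / 2)
      = (fun x => (x + L) / 2) ∘ (fun x => L + M - x) := by
    funext x; simp only [Function.comp_apply]; ring
  unfold IsSelfSimilar
  conv_lhs => rw [hμ]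
  rw [Measure.map_add _ _ hr, Measure.map_smul, Measure.map_smul, Measure.map_map hr hf₁,
    Measure.map_map hr hf₂, e₁, e₂, ← Measure.map_map hf₂ hr, ← Measure.map_map hf₁ hr, add_comm]

lemma integral_id [IsProbabilityMeasure μ] (hμ : IsSelfSimilar μ L M μ₁ μ₂) (h1 : 0 ≤ μ₁)
    (h2 : 0 ≤ μ₂) (hsum : μ₁ + μ₂ = 1) (hsupp : ∀ᵐ x ∂μ, x ∈ Icc L M) :
    ∫ x, x ∂μ = μ₁ * L + μ₂ * M := by
  have hint := integrable_id_of_ae_mem_Icc hsupp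
  have key := hμ.integral_eq h1 h2 hint
  simp only [integral_div, integral_add hint (integrable_const _), integral_const, probReal_univ,
    one_smul] at key
  linear_combination 2 * key + (∫ x, x ∂μ) * hsum

end IsSelfSimilar

lemma hatL_eq_indicator (L M : ℝ) (m : ℕ) :
    hatL L M m =
      (Icc L (L + (M - L) / 2 ^ m)).indicator (fun Y => 1 - 2 ^ m / (M - L) * (Y - L)) := by
  funext Y
  simp only [hatL, indicator_apply]

lemma integrable_hatL (L M : ℝ) (m : ℕ) (μ : Measure ℝ) [IsFiniteMeasureOnCompacts μ] :
    Integrable (hatL L M m) μ := by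
  rw [hatL_eq_indicator]
  exact (Continuous.integrableOn_Icc (by fun_prop)).integrable_indicator measurableSet_Icc

lemma hatL_succ_add_left_div_two (L M : ℝ) (m : ℕ) (x : ℝ) :
    hatL L M (m + 1) ((x + L) / 2) = hatL L M m x := by
  have hc : (M - L) / 2 ^ (m + 1) = (M - L) / 2 ^ m / 2 := by rw [pow_succ]; ring
  unfold hatL
  rw [hc]
  by_cases hx : x ∈ Icc L (L + (M - L) / 2 ^ m)
  · rw [if_pos ⟨by linarith [hx.1], by linarith [hx.2]⟩, if_pos hx, pow_succ]
    ring
  · rw [if_neg hx, if_neg fun h => hx ⟨by linarith [h.1], by linarith [h.2]⟩]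

lemma hatL_succ_add_right_div_two {L M : ℝ} (hLM : L < M) (m : ℕ) {x : ℝ} (hx : L ≤ x) :
    hatL L M (m + 1) ((x + M) / 2) = 0 := by
  have hML : 0 < M - L := by linarith
  have hle : (M - L) / 2 ^ (m + 1) ≤ (M - L) / 2 :=
    div_le_div_of_nonneg_left hML.le two_pos (le_self_pow₀ one_le_two m.succ_ne_zero)
  unfold hatL
  split_ifs with h
  · -- `(x + M) / 2` can only reach the support at its right end, where the hat vanishes
    have heq : (x + M) / 2 = L + (M - L) / 2 ^ (m + 1) := le_antisymm h.2 (by linarith)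
    rw [heq]
    field_simp
    ring
  · rfl

lemma hatL_zero_of_mem_Icc {L M : ℝ} (hLM : L < M) {x : ℝ} (hx : x ∈ Icc L M) :
    hatL L M 0 x = (M - x) / (M - L) := by
  have hML : M - L ≠ 0 := by linarith
  rw [hatL, if_pos (by simpa using hx)]
  field_simp
  ring

lemma hatM_eq_hatL_reflect (L M : ℝ) (m : ℕ) (x : ℝ) :
    hatM L M m x = hatL L M m (L + M - x) := by
  unfold hatL hatM
  by_cases h : x ∈ Icc (M - (M - L) / 2 ^ m) M
  · rw [if_pos h, if_pos ⟨by linarith [h.2], by linarith [h.1]⟩]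
    ring
  · rw [if_neg h, if_neg fun hc => h ⟨by linarith [hc.2], by linarith [hc.1]⟩]

lemma IsSelfSimilar.integral_hatL {μ : Measure ℝ} [IsProbabilityMeasure μ] {L M μ₁ μ₂ : ℝ}
    (hμ : IsSelfSimilar μ L M μ₁ μ₂) (h1 : 0 ≤ μ₁) (h2 : 0 ≤ μ₂) (hsum : μ₁ + μ₂ = 1)
    (hLM : L < M) (hsupp : ∀ᵐ x ∂μ, x ∈ Icc L M) (m : ℕ) :
    ∫ x, hatL L M m x ∂μ = μ₁ ^ (m + 1) := by
  induction m with
  | zero =>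
    have hML : M - L ≠ 0 := by linarith
    calc ∫ x, hatL L M 0 x ∂μ = ∫ x, (M - x) / (M - L) ∂μ :=
          integral_congr_ae (hsupp.mono fun x hx => hatL_zero_of_mem_Icc hLM hx)
      _ = (M - (μ₁ * L + μ₂ * M)) / (M - L) := by
          rw [integral_div, integral_sub (integrable_const M) (integrable_id_of_ae_mem_Icc hsupp),
            integral_const, probReal_univ, one_smul, hμ.integral_id h1 h2 hsum hsupp]
      _ = μ₁ ^ (0 + 1) := by
          rw [zero_add, pow_one, div_eq_iff hML]
          linear_combination (-M) * hsum
  | succ m ih =>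
    have hright : ∫ x, hatL L M (m + 1) ((x + M) / 2) ∂μ = 0 :=
      integral_eq_zero_of_ae (hsupp.mono fun x hx => hatL_succ_add_right_div_two hLM m hx.1)
    rw [hμ.integral_eq h1 h2 (integrable_hatL L M (m + 1) μ), hright]
    simp only [hatL_succ_add_left_div_two, ih]
    ring

theorem stmt_12 (L M : ℝ) (hLM : L < M) (μ₁ μ₂ : ℝ) (h1 : 0 < μ₁) (h2 : 0 < μ₂)
    (hsum : μ₁ + μ₂ = 1)
    (μ : MeasureTheory.Measure ℝ) [MeasureTheory.IsProbabilityMeasure μ]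
    (hself : μ = ENNReal.ofReal μ₁ • μ.map (fun x => (x + L) / 2) +
              ENNReal.ofReal μ₂ • μ.map (fun x => (x + M) / 2))
    (hsupp : μ (Set.Icc L M)ᶜ = 0) (m : ℕ) :
    (∫ Y in Set.Icc L M, hatL L M m Y ∂μ) = μ₁^(m+1) ∧
    (∫ Y in Set.Icc L M, hatM L M m Y ∂μ) = μ₂^(m+1) := by
  have hμ : IsSelfSimilar μ L M μ₁ μ₂ := hself
  have hae : ∀ᵐ x ∂μ, x ∈ Icc L M := mem_ae_iff.2 hsupp
  have hr : Measurable (fun x : ℝ => L + M - x) := by fun_prop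
  have hae_refl : ∀ᵐ x ∂μ.map (fun x => L + M - x), x ∈ Icc L M :=
    (ae_map_iff hr.aemeasurable measurableSet_Icc).2
      (hae.mono fun x hx => ⟨by linarith [hx.2], by linarith [hx.1]⟩)
  have := Measure.isProbabilityMeasure_map (μ := μ) hr.aemeasurable
  rw [Measure.restrict_eq_self_of_ae_mem hae]
  refine ⟨hμ.integral_hatL h1.le h2.le hsum hLM hae m, ?_⟩
  calc ∫ x, hatM L M m x ∂μ = ∫ x, hatL L M m x ∂μ.map (fun x => L + M - x) := by
        simp only [hatM_eq_hatL_reflect, integral_map hr.aemeasurable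
          (integrable_hatL L M m _).aestronglyMeasurable]
    _ = μ₂ ^ (m + 1) :=
        hμ.map_reflect.integral_hatL h2.le h1.le (by linarith) hLM hae_refl m
end
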